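/- arXiv:1812.07186 — 3 statements merged into one kernel-verified Lean document; each statement's English description precedes it below -/
import Mathlib

section
/- For any matrices A, P ∈ ℝ^{m×m} and bounded measurable functions B₁, Q₁ : [a,b] → ℝ^{m×n}, B₂, Q₂ : [a,b] → ℝ^{n×m}, D, S : [a,b] → ℝ^{n×n}, C₁, C₂, R₁, R₂ : [a,b]×[a,b] → ℝ^{n×n}, the composition 𝒫_{A,B₁,B₂,D,C₁,C₂} ∘ 𝒫_{P,Q₁,Q₂,S,R₁,R₂} equals 𝒫_{P̂,Q̂₁,Q̂₂,Ŝ,R̂₁,R̂₂}, where: P̂ = AP + ∫ₐᵇ B₁(s)Q₂(s) ds; Q̂₁(s) = AQ₁(s) + B₁(s)S(s) + ∫ₛᵇ B₁(η)R₁(η,s) dη + ∫ₐˢ B₁(η)R₂(η,s) dη; Q̂₂(s) = B₂(s)P + D(s)Q₂(s) + ∫ₐˢ C₁(s,η)Q₂(η) dη + ∫ₛᵇ C₂(s,η)Q₂(η) dη; Ŝ(s) = D(s)S(s); R̂₁(s,η) = B₂(s)Q₁(η) + D(s)R₁(s,η) + C₁(s,η)S(η) + ∫ₐ^η C₁(s,θ)R₂(θ,η)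 dθ + ∫_η^s C₁(s,θ)R₁(θ,η) dθ + ∫ₛᵇ C₂(s,θ)R₁(θ,η) dθ; and R̂₂(s,η) = B₂(s)Q₁(η) + D(s)R₂(s,η) + C₂(s,η)S(η) + ∫ₐˢ C₁(s,θ)R₂(θ,η) dθ + ∫ₛ^η C₂(s,θ)R₂(θ,η) dθ + ∫_η^b C₂(s,θ)R₁(θ,η) dθ; i.e. both operators agree on every (x,z) ∈ ℝ^m × L²([a,b];ℝ^n). -/
open MeasureTheory Matrix Set

noncomputable section

/-- The operator `𝒫_{P,Q₁,Q₂,S,R₁,R₂}` on `ℝ^m × L²([a,b];ℝⁿ)`, applied to a pair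
`u = (x, z)`.  All integrals are taken entrywise. -/
def Pop (a b : ℝ) {m n : ℕ}
    (P : Matrix (Fin m) (Fin m) ℝ)
    (Q1 : ℝ → Matrix (Fin m) (Fin n) ℝ)
    (Q2 : ℝ → Matrix (Fin n) (Fin m) ℝ)
    (S : ℝ → Matrix (Fin n) (Fin n) ℝ)
    (R1 R2 : ℝ → ℝ → Matrix (Fin n) (Fin n) ℝ)
    (u : (Fin m → ℝ) × (ℝ → Fin n → ℝ)) :
    (Fin m → ℝ) × (ℝ → Fin n → ℝ) :=
  (P.mulVec u.1 + (fun i => ∫ s in a..b, (Q1 s).mulVec (u.2 s) i),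
   fun s => (Q2 s).mulVec u.1 + (S s).mulVec (u.2 s)
     + (fun i => ∫ η in a..s, (R1 s η).mulVec (u.2 η) i)
     + (fun i => ∫ η in s..b, (R2 s η).mulVec (u.2 η) i))

/-- The inner product on `X = ℝ^m × L²([a,b];ℝⁿ)`:
`⟨(x₁,x₂),(z₁,z₂)⟩_X = x₁ᵀz₁ + ∫ₐᵇ x₂(s)ᵀ z₂(s) ds`. -/
def innerX (a b : ℝ) {m n : ℕ}
    (u v : (Fin m → ℝ) × (ℝ → Fin n → ℝ)) : ℝ :=
  u.1 ⬝ᵥ v.1 + ∫ s in a..b, u.2 s ⬝ᵥ v.2 s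

/-- `z ∈ L²([a,b];ℝⁿ)`. -/
def MemL2 (a b : ℝ) {n : ℕ} (z : ℝ → Fin n → ℝ) : Prop :=
  MemLp z 2 (volume.restrict (Icc a b))

/-- A bounded measurable matrix-valued function on `[a,b]`. -/
def BddMeas (a b : ℝ) {k l : ℕ} (F : ℝ → Matrix (Fin k) (Fin l) ℝ) : Prop :=
  (∀ i j, Measurable fun s => F s i j) ∧
    ∃ C, ∀ s ∈ Icc a b, ∀ i j, |F s i j| ≤ C

/-- A bounded measurable matrix-valued kernel on `[a,b] × [a,b]`. -/
def BddMeas2 (a b : ℝ) {k l : ℕ} (F : ℝ → ℝ → Matrix (Fin k) (Fin l) ℝ) : Prop :=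
  (∀ i j, Measurable fun p : ℝ × ℝ => F p.1 p.2 i j) ∧
    ∃ C, ∀ s ∈ Icc a b, ∀ η ∈ Icc a b, ∀ i j, |F s η i j| ≤ C

/-- Entrywise integral of a matrix-valued function. -/
def mInt {k l : ℕ} (c d : ℝ) (F : ℝ → Matrix (Fin k) (Fin l) ℝ) :
    Matrix (Fin k) (Fin l) ℝ :=
  Matrix.of fun i j => ∫ t in c..d, F t i j
section

variable {m n : ℕ} (a b : ℝ)
variable (A P : Matrix (Fin m) (Fin m) ℝ)
variable (B1 Q1 : ℝ → Matrix (Fin m) (Fin n) ℝ)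
variable (B2 Q2 : ℝ → Matrix (Fin n) (Fin m) ℝ)
variable (D S : ℝ → Matrix (Fin n) (Fin n) ℝ)
variable (C1 C2 R1 R2 : ℝ → ℝ → Matrix (Fin n) (Fin n) ℝ)

/-- `P̂ = AP + ∫ₐᵇ B₁(s)Q₂(s) ds`. -/
def Pcomp : Matrix (Fin m) (Fin m) ℝ :=
  A * P + mInt a b (fun s => B1 s * Q2 s)

/-- `Q̂₁(s) = AQ₁(s) + B₁(s)S(s) + ∫ₛᵇ B₁(η)R₁(η,s) dη + ∫ₐˢ B₁(η)R₂(η,s) dη`. -/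
def Q1comp (s : ℝ) : Matrix (Fin m) (Fin n) ℝ :=
  A * Q1 s + B1 s * S s + mInt s b (fun η => B1 η * R1 η s)
    + mInt a s (fun η => B1 η * R2 η s)

/-- `Q̂₂(s) = B₂(s)P + D(s)Q₂(s) + ∫ₐˢ C₁(s,η)Q₂(η) dη + ∫ₛᵇ C₂(s,η)Q₂(η) dη`. -/
def Q2comp (s : ℝ) : Matrix (Fin n) (Fin m) ℝ :=
  B2 s * P + D s * Q2 s + mInt a s (fun η => C1 s η * Q2 η)
    + mInt s b (fun η => C2 s η * Q2 η)

/-- `Ŝ(s) = D(s)S(s)`. -/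
def Scomp (s : ℝ) : Matrix (Fin n) (Fin n) ℝ := D s * S s

/-- `R̂₁(s,η)` of the composition. -/
def R1comp (s η : ℝ) : Matrix (Fin n) (Fin n) ℝ :=
  B2 s * Q1 η + D s * R1 s η + C1 s η * S η
    + mInt a η (fun θ => C1 s θ * R2 θ η)
    + mInt η s (fun θ => C1 s θ * R1 θ η)
    + mInt s b (fun θ => C2 s θ * R1 θ η)

/-- `R̂₂(s,η)` of the composition. -/
def R2comp (s η : ℝ) : Matrix (Fin n) (Fin n) ℝ :=
  B2 s * Q1 η + D s * R2 s η + C2 s η * S η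
    + mInt a s (fun θ => C1 s θ * R2 θ η)
    + mInt s η (fun θ => C2 s θ * R2 θ η)
    + mInt η b (fun θ => C2 s θ * R1 θ η)

end

/-!
Glue the two Volterra kernels of `Pop` into one kernel `splitKernel R1 R2` on the whole square
`[a,b]²`. Then `Pop` agrees on `[a,b]` with `kernelOp`, an operator of the same shape whose
integral part runs over all of `[a,b]`. Composing two operators of this kind is linear algebra
plus one application of Fubini's theorem on the square. The integrals in the resulting parameters
run over all of `[a,b]` with split kernels in the integrand; splitting them at `s` and `η` gives
the formulas for `P̂, Q̂₁, Q̂₂, Ŝ, R̂₁, R̂₂`.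
-/

open Function intervalIntegral
open scoped Interval

section IntervalIntegral

variable {a b c d : ℝ} {k l : ℕ}

theorem MeasureTheory.IntervalIntegrable.eval {ι : Type*} [Fintype ι] {f : ℝ → ι → ℝ}
    (hf : IntervalIntegrable f volume a b) (i : ι) :
    IntervalIntegrable (fun x => f x i) volume a b :=
  ⟨hf.1.eval i, hf.2.eval i⟩

theorem intervalIntegral.eval_integral {ι : Type*} [Fintype ι] {f : ℝ → ι → ℝ}
    (hf : IntervalIntegrable f volume a b) (i : ι) :
    (∫ x in a..b, f x) i = ∫ x in a..b, f x i :=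
  ((ContinuousLinearMap.proj (R := ℝ) (φ := fun _ : ι => ℝ) i).intervalIntegral_comp_comm
    hf).symm

theorem Matrix.mulVec_intervalIntegral (M : Matrix (Fin k) (Fin l) ℝ) {f : ℝ → Fin l → ℝ}
    (hf : IntervalIntegrable f volume a b) :
    M *ᵥ ∫ x in a..b, f x = ∫ x in a..b, M *ᵥ f x :=
  (M.mulVecLin.toContinuousLinearMap.intervalIntegral_comp_comm hf).symm

theorem intervalIntegral.integral_congr_Ioo {E : Type*} [NormedAddCommGroup E] [NormedSpace ℝ E]
    {f g : ℝ → E} (hab : a ≤ b) (h : EqOn f g (Ioo a b)) :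
    ∫ x in a..b, f x = ∫ x in a..b, g x := by
  simp only [integral_of_le hab, integral_Ioc_eq_integral_Ioo]
  exact setIntegral_congr_fun measurableSet_Ioo h

theorem intervalIntegral.integral_eq_add_of_eqOn_Ioo {E : Type*} [NormedAddCommGroup E]
    [NormedSpace ℝ E] {f g h : ℝ → E} (hac : a ≤ c) (hcb : c ≤ b)
    (hf : IntervalIntegrable f volume a b) (hg : EqOn f g (Ioo a c)) (hh : EqOn f h (Ioo c b)) :
    ∫ x in a..b, f x = (∫ x in a..c, g x) + ∫ x in c..b, h x := by
  have hc : c ∈ [[a, b]] := Icc_subset_uIcc ⟨hac, hcb⟩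
  rw [← integral_add_adjacent_intervals (hf.mono_set (uIcc_subset_uIcc_left hc))
    (hf.mono_set (uIcc_subset_uIcc_right hc)), integral_congr_Ioo hac hg,
    integral_congr_Ioo hcb hh]

theorem mInt_eq_add_of_eqOn_Ioo (hac : a ≤ c) (hcb : c ≤ b)
    {F G H : ℝ → Matrix (Fin k) (Fin l) ℝ}
    (hF : ∀ i j, IntervalIntegrable (fun t => F t i j) volume a b) (hG : EqOn F G (Ioo a c))
    (hH : EqOn F H (Ioo c b)) : mInt a b F = mInt a c G + mInt c b H := by
  ext i j
  exact integral_eq_add_of_eqOn_Ioo hac hcb (hF i j) (fun t ht => by rw [hG ht])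
    (fun t ht => by rw [hH ht])

theorem mInt_eq_add_add_of_eqOn_Ioo (hac : a ≤ c) (hcd : c ≤ d) (hdb : d ≤ b)
    {F G H J : ℝ → Matrix (Fin k) (Fin l) ℝ}
    (hF : ∀ i j, IntervalIntegrable (fun t => F t i j) volume a b) (hG : EqOn F G (Ioo a c))
    (hH : EqOn F H (Ioo c d)) (hJ : EqOn F J (Ioo d b)) :
    mInt a b F = mInt a c G + mInt c d H + mInt d b J := by
  have hc : c ∈ [[a, b]] := Icc_subset_uIcc ⟨hac, hcd.trans hdb⟩
  rw [mInt_eq_add_of_eqOn_Ioo hac (hcd.trans hdb) hF hG (fun _ _ => rfl),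
    mInt_eq_add_of_eqOn_Ioo hcd hdb (fun i j => (hF i j).mono_set (uIcc_subset_uIcc_right hc))
      hH hJ, add_assoc]

end IntervalIntegral

theorem Matrix.abs_mul_apply_le {k l r : ℕ} {A : Matrix (Fin k) (Fin l) ℝ}
    {B : Matrix (Fin l) (Fin r) ℝ} {C D : ℝ} (hA : ∀ i j, |A i j| ≤ C) (hB : ∀ i j, |B i j| ≤ D)
    (i : Fin k) (j : Fin r) : |(A * B) i j| ≤ l * (C * D) := by
  calc |(A * B) i j| = |∑ p, A i p * B p j| := rfl
    _ ≤ ∑ p, |A i p * B p j| := Finset.abs_sum_le_sum_abs _ _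
    _ ≤ ∑ _p : Fin l, C * D := Finset.sum_le_sum fun p _ => by
        rw [abs_mul]
        exact mul_le_mul (hA i p) (hB p j) (abs_nonneg _) ((abs_nonneg _).trans (hA i p))
    _ = l * (C * D) := by simp

theorem MeasureTheory.Integrable.mulVec_of_bound {α : Type*} [MeasurableSpace α]
    {μ : Measure α} {k l : ℕ} {M : α → Matrix (Fin k) (Fin l) ℝ} {v : α → Fin l → ℝ} {C : ℝ}
    (hv : Integrable v μ) (hM : ∀ i j, AEStronglyMeasurable (fun x => M x i j) μ)
    (hC : ∀ᵐ x ∂μ, ∀ i j, |M x i j| ≤ C) :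
    Integrable (fun x => M x *ᵥ v x) μ := by
  refine Integrable.of_eval fun i => ?_
  simp only [mulVec, dotProduct]
  refine integrable_finsetSum _ fun j _ => (hv.eval j).bdd_mul (c := C) (hM i j) ?_
  filter_upwards [hC] with x hx using hx i j

section BddMeas

variable {a b : ℝ} {k l r : ℕ}

theorem BddMeas.const (M : Matrix (Fin k) (Fin l) ℝ) : BddMeas a b fun _ => M := by
  obtain ⟨C, hC⟩ := (Set.finite_range fun p : Fin k × Fin l => |M p.1 p.2|).bddAbove
  exact ⟨fun _ _ => measurable_const, C, fun _ _ i j => hC ⟨(i, j), rfl⟩⟩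

theorem BddMeas.add {F G : ℝ → Matrix (Fin k) (Fin l) ℝ} (hF : BddMeas a b F)
    (hG : BddMeas a b G) : BddMeas a b fun s => F s + G s := by
  obtain ⟨mF, C, hC⟩ := hF
  obtain ⟨mG, D, hD⟩ := hG
  exact ⟨fun i j => (mF i j).add (mG i j), C + D, fun s hs i j =>
    (abs_add_le _ _).trans (add_le_add (hC s hs i j) (hD s hs i j))⟩

theorem BddMeas.mul {F : ℝ → Matrix (Fin k) (Fin l) ℝ} {G : ℝ → Matrix (Fin l) (Fin r) ℝ}
    (hF : BddMeas a b F) (hG : BddMeas a b G) : BddMeas a b fun s => F s * G s := by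
  obtain ⟨mF, C, hC⟩ := hF
  obtain ⟨mG, D, hD⟩ := hG
  refine ⟨fun i j => ?_, l * (C * D), fun s hs => abs_mul_apply_le (hC s hs) (hD s hs)⟩
  simp only [mul_apply]
  exact Finset.measurable_sum _ fun p _ => (mF i p).mul (mG p j)

theorem BddMeas.intervalIntegrable_apply (hab : a ≤ b) {F : ℝ → Matrix (Fin k) (Fin l) ℝ}
    (hF : BddMeas a b F) (i : Fin k) (j : Fin l) :
    IntervalIntegrable (fun s => F s i j) volume a b := by
  obtain ⟨mF, C, hC⟩ := hF
  rw [intervalIntegrable_iff_integrableOn_Ioc_of_le hab]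
  exact Measure.integrableOn_of_bounded measure_Ioc_lt_top.ne (mF i j).aestronglyMeasurable
    (ae_restrict_of_forall_mem measurableSet_Ioc fun s hs => hC s (Ioc_subset_Icc_self hs) i j)

theorem BddMeas.intervalIntegrable_mulVec (hab : a ≤ b) {F : ℝ → Matrix (Fin k) (Fin l) ℝ}
    (hF : BddMeas a b F) {v : ℝ → Fin l → ℝ} (hv : IntervalIntegrable v volume a b) :
    IntervalIntegrable (fun s => F s *ᵥ v s) volume a b := by
  obtain ⟨mF, C, hC⟩ := hF
  rw [intervalIntegrable_iff_integrableOn_Ioc_of_le hab] at hv ⊢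
  exact hv.mulVec_of_bound (fun i j => (mF i j).aestronglyMeasurable)
    (ae_restrict_of_forall_mem measurableSet_Ioc fun s hs => hC s (Ioc_subset_Icc_self hs))

theorem BddMeas.mInt_mulVec (hab : a ≤ b) {F : ℝ → Matrix (Fin k) (Fin l) ℝ}
    (hF : BddMeas a b F) (v : Fin l → ℝ) : mInt a b F *ᵥ v = ∫ s in a..b, F s *ᵥ v := by
  ext i
  rw [eval_integral (hF.intervalIntegrable_mulVec hab intervalIntegrable_const) i]
  simp only [mulVec, dotProduct, mInt, of_apply]
  rw [integral_finsetSum fun j _ => (hF.intervalIntegrable_apply hab i j).mul_const _]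
  simp only [intervalIntegral.integral_mul_const]

theorem BddMeas.integral_add_mulVec (hab : a ≤ b) {F G : ℝ → Matrix (Fin k) (Fin l) ℝ}
    (hF : BddMeas a b F) (hG : BddMeas a b G) {v : ℝ → Fin l → ℝ}
    (hv : IntervalIntegrable v volume a b) :
    ∫ s in a..b, (F s + G s) *ᵥ v s = (∫ s in a..b, F s *ᵥ v s) + ∫ s in a..b, G s *ᵥ v s := by
  simp only [add_mulVec]
  exact integral_add (hF.intervalIntegrable_mulVec hab hv) (hG.intervalIntegrable_mulVec hab hv)

end BddMeas

def splitKernel {n : ℕ} (R1 R2 : ℝ → ℝ → Matrix (Fin n) (Fin n) ℝ) (s η : ℝ) :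
    Matrix (Fin n) (Fin n) ℝ :=
  if η ≤ s then R1 s η else R2 s η

section BddMeas2

variable {a b : ℝ} {k l r : ℕ}

theorem BddMeas2.apply_left {K : ℝ → ℝ → Matrix (Fin k) (Fin l) ℝ} (hK : BddMeas2 a b K)
    {s : ℝ} (hs : s ∈ Icc a b) : BddMeas a b (K s) :=
  ⟨fun i j => (hK.1 i j).comp measurable_prodMk_left, hK.2.choose,
    fun η hη => hK.2.choose_spec s hs η hη⟩

theorem BddMeas2.apply_right {K : ℝ → ℝ → Matrix (Fin k) (Fin l) ℝ} (hK : BddMeas2 a b K)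
    {η : ℝ} (hη : η ∈ Icc a b) : BddMeas a b fun s => K s η :=
  ⟨fun i j => (hK.1 i j).comp measurable_prodMk_right, hK.2.choose,
    fun s hs => hK.2.choose_spec s hs η hη⟩

theorem BddMeas2.mul_left {F : ℝ → Matrix (Fin k) (Fin l) ℝ}
    {K : ℝ → ℝ → Matrix (Fin l) (Fin r) ℝ} (hF : BddMeas a b F) (hK : BddMeas2 a b K) :
    BddMeas2 a b fun s η => F s * K s η := by
  obtain ⟨mF, C, hC⟩ := hF
  obtain ⟨mK, D, hD⟩ := hK
  refine ⟨fun i j => ?_, l * (C * D),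
    fun s hs η hη => abs_mul_apply_le (hC s hs) (hD s hs η hη)⟩
  simp only [mul_apply]
  exact Finset.measurable_sum _ fun p _ => ((mF i p).comp measurable_fst).mul (mK p j)

theorem BddMeas2.splitKernel {n : ℕ} {R1 R2 : ℝ → ℝ → Matrix (Fin n) (Fin n) ℝ}
    (hR1 : BddMeas2 a b R1) (hR2 : BddMeas2 a b R2) : BddMeas2 a b (splitKernel R1 R2) := by
  obtain ⟨m1, C1, hC1⟩ := hR1
  obtain ⟨m2, C2, hC2⟩ := hR2
  refine ⟨fun i j => ?_, max C1 C2, fun s hs η hη i j => ?_⟩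
  · simp only [_root_.splitKernel, apply_ite (fun M : Matrix (Fin n) (Fin n) ℝ => M i j)]
    exact Measurable.ite (measurableSet_le measurable_snd measurable_fst) (m1 i j) (m2 i j)
  · unfold _root_.splitKernel
    split_ifs
    exacts [(hC1 s hs η hη i j).trans (le_max_left _ _),
      (hC2 s hs η hη i j).trans (le_max_right _ _)]

theorem BddMeas2.mInt (hab : a ≤ b) {K : ℝ → ℝ → Matrix (Fin k) (Fin l) ℝ}
    (hK : BddMeas2 a b K) : BddMeas a b fun η => mInt a b fun s => K s η := by
  obtain ⟨mK, C, hC⟩ := hK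
  refine ⟨fun i j => ?_, C * (b - a), fun η hη i j => ?_⟩
  · simp only [_root_.mInt, of_apply, integral_of_le hab]
    exact ((mK i j).stronglyMeasurable.integral_prod_left'
      (μ := volume.restrict (Ioc a b))).measurable
  · have := norm_integral_le_of_norm_le_const (a := a) (b := b) (f := fun s => K s η i j)
      fun s hs => hC s (Ioc_subset_Icc_self (uIoc_of_le hab ▸ hs)) η hη i j
    simpa [_root_.mInt, abs_of_nonneg (sub_nonneg.2 hab)] using this

theorem BddMeas2.integrable_prod_mulVec (hab : a ≤ b) {K : ℝ → ℝ → Matrix (Fin k) (Fin l) ℝ}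
    (hK : BddMeas2 a b K) {v : ℝ → Fin l → ℝ} (hv : IntervalIntegrable v volume a b) :
    Integrable (uncurry fun s η => K s η *ᵥ v η)
      ((volume.restrict (Ioc a b)).prod (volume.restrict (Ioc a b))) := by
  obtain ⟨mK, C, hC⟩ := hK
  rw [intervalIntegrable_iff_integrableOn_Ioc_of_le hab] at hv
  refine (hv.comp_snd _).mulVec_of_bound (C := C) (fun i j => (mK i j).aestronglyMeasurable) ?_
  rw [Measure.prod_restrict]
  exact ae_restrict_of_forall_mem (measurableSet_Ioc.prod measurableSet_Ioc) fun p hp =>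
    hC p.1 (Ioc_subset_Icc_self hp.1) p.2 (Ioc_subset_Icc_self hp.2)

theorem BddMeas2.intervalIntegrable_integral_mulVec (hab : a ≤ b)
    {K : ℝ → ℝ → Matrix (Fin k) (Fin l) ℝ} (hK : BddMeas2 a b K) {v : ℝ → Fin l → ℝ}
    (hv : IntervalIntegrable v volume a b) :
    IntervalIntegrable (fun s => ∫ η in a..b, K s η *ᵥ v η) volume a b := by
  rw [intervalIntegrable_iff_integrableOn_Ioc_of_le hab]
  simp only [integral_of_le hab]
  exact (hK.integrable_prod_mulVec hab hv).integral_prod_left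

theorem integral_mulVec_integral_mulVec (hab : a ≤ b) {F : ℝ → Matrix (Fin k) (Fin l) ℝ}
    {K : ℝ → ℝ → Matrix (Fin l) (Fin r) ℝ} (hF : BddMeas a b F) (hK : BddMeas2 a b K)
    {z : ℝ → Fin r → ℝ} (hz : IntervalIntegrable z volume a b) :
    ∫ s in a..b, F s *ᵥ ∫ η in a..b, K s η *ᵥ z η
      = ∫ η in a..b, (mInt a b fun s => F s * K s η) *ᵥ z η := by
  have huIcc : [[a, b]] = Icc a b := uIcc_of_le hab
  calc ∫ s in a..b, F s *ᵥ ∫ η in a..b, K s η *ᵥ z η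
      = ∫ s in a..b, ∫ η in a..b, (F s * K s η) *ᵥ z η := integral_congr fun s hs => by
        rw [huIcc] at hs
        simp only [mulVec_intervalIntegral _ ((hK.apply_left hs).intervalIntegrable_mulVec hab hz),
          mulVec_mulVec]
    _ = ∫ η in a..b, ∫ s in a..b, (F s * K s η) *ᵥ z η := by
        simp only [integral_of_le hab]
        exact integral_integral_swap ((hK.mul_left hF).integrable_prod_mulVec hab hz)
    _ = ∫ η in a..b, (mInt a b fun s => F s * K s η) *ᵥ z η := integral_congr fun η hη => by
        rw [huIcc] at hη
        exact (((hK.mul_left hF).apply_right hη).mInt_mulVec hab (z η)).symm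

end BddMeas2

section KernelOp

variable {a b : ℝ} {k m n : ℕ}

def kernelOp (a b : ℝ) (P : Matrix (Fin m) (Fin m) ℝ) (Q1 : ℝ → Matrix (Fin m) (Fin n) ℝ)
    (Q2 : ℝ → Matrix (Fin n) (Fin m) ℝ) (S : ℝ → Matrix (Fin n) (Fin n) ℝ)
    (K : ℝ → ℝ → Matrix (Fin n) (Fin n) ℝ) (u : (Fin m → ℝ) × (ℝ → Fin n → ℝ)) :
    (Fin m → ℝ) × (ℝ → Fin n → ℝ) :=
  (P *ᵥ u.1 + ∫ s in a..b, Q1 s *ᵥ u.2 s,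
   fun s => Q2 s *ᵥ u.1 + S s *ᵥ u.2 s + ∫ η in a..b, K s η *ᵥ u.2 η)

def AgreeOn (a b : ℝ) (u v : (Fin m → ℝ) × (ℝ → Fin n → ℝ)) : Prop :=
  u.1 = v.1 ∧ EqOn u.2 v.2 (Icc a b)

theorem AgreeOn.symm {u v : (Fin m → ℝ) × (ℝ → Fin n → ℝ)} (h : AgreeOn a b u v) :
    AgreeOn a b v u :=
  ⟨h.1.symm, h.2.symm⟩

theorem AgreeOn.trans {u v w : (Fin m → ℝ) × (ℝ → Fin n → ℝ)} (h : AgreeOn a b u v)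
    (h' : AgreeOn a b v w) : AgreeOn a b u w :=
  ⟨h.1.trans h'.1, h.2.trans h'.2⟩

theorem BddMeas.const_mul_add_mul_add_mInt (hab : a ≤ b) (M : Matrix (Fin k) (Fin m) ℝ)
    {Q1 : ℝ → Matrix (Fin m) (Fin n) ℝ} {F : ℝ → Matrix (Fin k) (Fin n) ℝ}
    {S : ℝ → Matrix (Fin n) (Fin n) ℝ} {K : ℝ → ℝ → Matrix (Fin n) (Fin n) ℝ}
    (hQ1 : BddMeas a b Q1) (hF : BddMeas a b F) (hS : BddMeas a b S) (hK : BddMeas2 a b K) :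
    BddMeas a b fun η => M * Q1 η + F η * S η + mInt a b fun θ => F θ * K θ η :=
  (((BddMeas.const M).mul hQ1).add (hF.mul hS)).add ((hK.mul_left hF).mInt hab)

theorem kernelOp_snd_intervalIntegrable (hab : a ≤ b) {P : Matrix (Fin m) (Fin m) ℝ}
    {Q1 : ℝ → Matrix (Fin m) (Fin n) ℝ} {Q2 : ℝ → Matrix (Fin n) (Fin m) ℝ}
    {S : ℝ → Matrix (Fin n) (Fin n) ℝ} {K : ℝ → ℝ → Matrix (Fin n) (Fin n) ℝ}
    (hQ2 : BddMeas a b Q2) (hS : BddMeas a b S) (hK : BddMeas2 a b K) (x : Fin m → ℝ)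
    {z : ℝ → Fin n → ℝ} (hz : IntervalIntegrable z volume a b) :
    IntervalIntegrable (kernelOp a b P Q1 Q2 S K (x, z)).2 volume a b :=
  ((hQ2.intervalIntegrable_mulVec hab intervalIntegrable_const).add
    (hS.intervalIntegrable_mulVec hab hz)).add (hK.intervalIntegrable_integral_mulVec hab hz)

theorem mulVec_add_integral_mulVec_kernelOp (hab : a ≤ b) {P : Matrix (Fin m) (Fin m) ℝ}
    {Q1 : ℝ → Matrix (Fin m) (Fin n) ℝ} {Q2 : ℝ → Matrix (Fin n) (Fin m) ℝ}
    {S : ℝ → Matrix (Fin n) (Fin n) ℝ} {K : ℝ → ℝ → Matrix (Fin n) (Fin n) ℝ}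
    (hQ1 : BddMeas a b Q1) (hQ2 : BddMeas a b Q2) (hS : BddMeas a b S) (hK : BddMeas2 a b K)
    (M : Matrix (Fin k) (Fin m) ℝ) {F : ℝ → Matrix (Fin k) (Fin n) ℝ} (hF : BddMeas a b F)
    (x : Fin m → ℝ) {z : ℝ → Fin n → ℝ} (hz : IntervalIntegrable z volume a b) :
    M *ᵥ (kernelOp a b P Q1 Q2 S K (x, z)).1
        + ∫ s in a..b, F s *ᵥ (kernelOp a b P Q1 Q2 S K (x, z)).2 s
      = (M * P + mInt a b fun s => F s * Q2 s) *ᵥ x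
        + ∫ η in a..b, (M * Q1 η + F η * S η + mInt a b fun s => F s * K s η) *ᵥ z η := by
  have hw := hK.intervalIntegrable_integral_mulVec hab hz
  have hfst : M *ᵥ (kernelOp a b P Q1 Q2 S K (x, z)).1
      = (M * P) *ᵥ x + ∫ η in a..b, (M * Q1 η) *ᵥ z η := by
    simp only [kernelOp, mulVec_add, mulVec_mulVec,
      mulVec_intervalIntegral M (hQ1.intervalIntegrable_mulVec hab hz)]
  have hsnd : ∫ s in a..b, F s *ᵥ (kernelOp a b P Q1 Q2 S K (x, z)).2 s
      = (mInt a b fun s => F s * Q2 s) *ᵥ x + (∫ η in a..b, (F η * S η) *ᵥ z η)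
        + ∫ η in a..b, (mInt a b fun s => F s * K s η) *ᵥ z η := by
    have hFQ2 := (hF.mul hQ2).intervalIntegrable_mulVec hab (intervalIntegrable_const (c := x))
    have hFS := (hF.mul hS).intervalIntegrable_mulVec hab hz
    simp only [kernelOp, mulVec_add, mulVec_mulVec]
    rw [integral_add (hFQ2.add hFS) (hF.intervalIntegrable_mulVec hab hw), integral_add hFQ2 hFS,
      (hF.mul hQ2).mInt_mulVec hab, integral_mulVec_integral_mulVec hab hF hK hz]
  have hMQ1 := (BddMeas.const M).mul hQ1
  rw [hfst, hsnd, add_mulVec, BddMeas.integral_add_mulVec hab (hMQ1.add (hF.mul hS))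
    ((hK.mul_left hF).mInt hab) hz, BddMeas.integral_add_mulVec hab hMQ1 (hF.mul hS) hz]
  abel

theorem kernelOp_comp (hab : a ≤ b) {A P : Matrix (Fin m) (Fin m) ℝ}
    {B1 Q1 : ℝ → Matrix (Fin m) (Fin n) ℝ} {B2 Q2 : ℝ → Matrix (Fin n) (Fin m) ℝ}
    {D S : ℝ → Matrix (Fin n) (Fin n) ℝ} {L K : ℝ → ℝ → Matrix (Fin n) (Fin n) ℝ}
    (hB1 : BddMeas a b B1) (hL : BddMeas2 a b L) (hQ1 : BddMeas a b Q1) (hQ2 : BddMeas a b Q2)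
    (hS : BddMeas a b S) (hK : BddMeas2 a b K) (x : Fin m → ℝ) {z : ℝ → Fin n → ℝ}
    (hz : IntervalIntegrable z volume a b) :
    AgreeOn a b (kernelOp a b A B1 B2 D L (kernelOp a b P Q1 Q2 S K (x, z)))
      (kernelOp a b (A * P + mInt a b fun s => B1 s * Q2 s)
        (fun η => A * Q1 η + B1 η * S η + mInt a b fun s => B1 s * K s η)
        (fun s => B2 s * P + (mInt a b fun η => L s η * Q2 η) + D s * Q2 s)
        (fun s => D s * S s)
        (fun s η => B2 s * Q1 η + L s η * S η + (mInt a b fun θ => L s θ * K θ η) + D s * K s η)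
        (x, z)) := by
  refine ⟨mulVec_add_integral_mulVec_kernelOp hab hQ1 hQ2 hS hK A hB1 x hz, fun s hs => ?_⟩
  have hLs := hL.apply_left hs
  have hrow := mulVec_add_integral_mulVec_kernelOp (P := P) hab hQ1 hQ2 hS hK (B2 s) hLs x hz
  have hDu : D s *ᵥ (kernelOp a b P Q1 Q2 S K (x, z)).2 s
      = (D s * Q2 s) *ᵥ x + (D s * S s) *ᵥ z s + ∫ η in a..b, (D s * K s η) *ᵥ z η := by
    simp only [kernelOp, mulVec_add, mulVec_mulVec,
      mulVec_intervalIntegral (D s) ((hK.apply_left hs).intervalIntegrable_mulVec hab hz)]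
  calc (kernelOp a b A B1 B2 D L (kernelOp a b P Q1 Q2 S K (x, z))).2 s
      = (B2 s *ᵥ (kernelOp a b P Q1 Q2 S K (x, z)).1
          + ∫ η in a..b, L s η *ᵥ (kernelOp a b P Q1 Q2 S K (x, z)).2 η)
        + D s *ᵥ (kernelOp a b P Q1 Q2 S K (x, z)).2 s := by
        simp only [kernelOp]
        abel
    _ = _ := by
        rw [hrow, hDu]
        simp only [kernelOp]
        rw [BddMeas.integral_add_mulVec hab (.const_mul_add_mul_add_mInt hab (B2 s) hQ1 hLs hS hK)
          ((BddMeas.const _).mul (hK.apply_left hs)) hz]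
        simp only [add_mulVec]
        abel

end KernelOp

section Pop

variable {a b : ℝ} {m n : ℕ}

theorem AgreeOn.map_Pop (hab : a ≤ b) {u v : (Fin m → ℝ) × (ℝ → Fin n → ℝ)} (h : AgreeOn a b u v)
    (P : Matrix (Fin m) (Fin m) ℝ) (Q1 : ℝ → Matrix (Fin m) (Fin n) ℝ)
    (Q2 : ℝ → Matrix (Fin n) (Fin m) ℝ) (S : ℝ → Matrix (Fin n) (Fin n) ℝ)
    (R1 R2 : ℝ → ℝ → Matrix (Fin n) (Fin n) ℝ) :
    AgreeOn a b (Pop a b P Q1 Q2 S R1 R2 u) (Pop a b P Q1 Q2 S R1 R2 v) := by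
  obtain ⟨h1, h2⟩ := h
  have key : ∀ {c d}, c ∈ Icc a b → d ∈ Icc a b → ∀ {k} (F : ℝ → Matrix (Fin k) (Fin n) ℝ) i,
      ∫ t in c..d, (F t *ᵥ u.2 t) i = ∫ t in c..d, (F t *ᵥ v.2 t) i := fun hc hd _ F i =>
    integral_congr fun t ht => by rw [h2 (uIcc_subset_Icc hc hd ht)]
  refine ⟨?_, fun s hs => ?_⟩
  · simp only [Pop, h1, key (left_mem_Icc.2 hab) (right_mem_Icc.2 hab)]
  · simp only [Pop, h1, h2 hs, key (left_mem_Icc.2 hab) hs, key hs (right_mem_Icc.2 hab)]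

theorem Pop_agreeOn_kernelOp (hab : a ≤ b) {P : Matrix (Fin m) (Fin m) ℝ}
    {Q1 Q1' : ℝ → Matrix (Fin m) (Fin n) ℝ} {Q2 Q2' : ℝ → Matrix (Fin n) (Fin m) ℝ}
    {S : ℝ → Matrix (Fin n) (Fin n) ℝ} {R1 R2 K : ℝ → ℝ → Matrix (Fin n) (Fin n) ℝ}
    {u : (Fin m → ℝ) × (ℝ → Fin n → ℝ)} (hQ1 : EqOn Q1 Q1' (Icc a b))
    (hQ2 : EqOn Q2 Q2' (Icc a b)) (hR1 : ∀ s ∈ Icc a b, EqOn (K s) (R1 s) (Ioo a s))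
    (hR2 : ∀ s ∈ Icc a b, EqOn (K s) (R2 s) (Ioo s b))
    (hQ1' : BddMeas a b Q1') (hK : ∀ s ∈ Icc a b, BddMeas a b (K s))
    (hu : IntervalIntegrable u.2 volume a b) :
    AgreeOn a b (Pop a b P Q1 Q2 S R1 R2 u) (kernelOp a b P Q1' Q2' S K u) := by
  have hQ1u := hQ1'.intervalIntegrable_mulVec hab hu
  have hKu := fun s hs => (hK s hs).intervalIntegrable_mulVec hab hu
  refine ⟨?_, fun s hs => ?_⟩
  · simp only [Pop, kernelOp]
    congr 1
    ext i
    rw [eval_integral hQ1u]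
    exact integral_congr fun t ht => by rw [hQ1 (uIcc_of_le hab ▸ ht)]
  · simp only [Pop, kernelOp, hQ2 hs, add_assoc]
    congr 2
    ext i
    rw [Pi.add_apply, eval_integral (hKu s hs)]
    exact (integral_eq_add_of_eqOn_Ioo hs.1 hs.2 ((hKu s hs).eval i)
      (fun η hη => by simp only [hR1 s hs hη]) (fun η hη => by simp only [hR2 s hs hη])).symm

theorem Pop_agreeOn_kernelOp_splitKernel (hab : a ≤ b) (P : Matrix (Fin m) (Fin m) ℝ)
    {Q1 : ℝ → Matrix (Fin m) (Fin n) ℝ} (Q2 : ℝ → Matrix (Fin n) (Fin m) ℝ)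
    (S : ℝ → Matrix (Fin n) (Fin n) ℝ) {R1 R2 : ℝ → ℝ → Matrix (Fin n) (Fin n) ℝ}
    (hQ1 : BddMeas a b Q1) (hR1 : BddMeas2 a b R1) (hR2 : BddMeas2 a b R2)
    {u : (Fin m → ℝ) × (ℝ → Fin n → ℝ)} (hu : IntervalIntegrable u.2 volume a b) :
    AgreeOn a b (Pop a b P Q1 Q2 S R1 R2 u) (kernelOp a b P Q1 Q2 S (splitKernel R1 R2) u) :=
  Pop_agreeOn_kernelOp hab (fun _ _ => rfl) (fun _ _ => rfl)
    (fun _ _ _ hη => if_pos hη.2.le) (fun _ _ _ hη => if_neg (not_le.2 hη.1)) hQ1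
    (fun _ hs => (hR1.splitKernel hR2).apply_left hs) hu

end Pop

section CompositionFormulas

variable {a b : ℝ} {m n : ℕ}

theorem Q1comp_eq (hab : a ≤ b) (A : Matrix (Fin m) (Fin m) ℝ)
    {B1 : ℝ → Matrix (Fin m) (Fin n) ℝ} (Q1 : ℝ → Matrix (Fin m) (Fin n) ℝ)
    (S : ℝ → Matrix (Fin n) (Fin n) ℝ) {R1 R2 : ℝ → ℝ → Matrix (Fin n) (Fin n) ℝ}
    (hB1 : BddMeas a b B1) (hR1 : BddMeas2 a b R1) (hR2 : BddMeas2 a b R2) {s : ℝ}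
    (hs : s ∈ Icc a b) :
    Q1comp a b A B1 Q1 S R1 R2 s
      = A * Q1 s + B1 s * S s + mInt a b fun θ => B1 θ * splitKernel R1 R2 θ s := by
  rw [mInt_eq_add_of_eqOn_Ioo hs.1 hs.2
    ((hB1.mul ((hR1.splitKernel hR2).apply_right hs)).intervalIntegrable_apply hab)
    (G := fun θ => B1 θ * R2 θ s) (H := fun θ => B1 θ * R1 θ s)
    (fun θ hθ => by simp only [splitKernel, if_neg (not_le.2 hθ.2)])
    (fun θ hθ => by simp only [splitKernel, if_pos hθ.1.le])]
  simp only [Q1comp]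
  abel

theorem Q2comp_eq (hab : a ≤ b) (P : Matrix (Fin m) (Fin m) ℝ)
    (B2 : ℝ → Matrix (Fin n) (Fin m) ℝ) {Q2 : ℝ → Matrix (Fin n) (Fin m) ℝ}
    (D : ℝ → Matrix (Fin n) (Fin n) ℝ) {C1 C2 : ℝ → ℝ → Matrix (Fin n) (Fin n) ℝ}
    (hQ2 : BddMeas a b Q2) (hC1 : BddMeas2 a b C1) (hC2 : BddMeas2 a b C2) {s : ℝ}
    (hs : s ∈ Icc a b) :
    Q2comp a b P B2 Q2 D C1 C2 s
      = B2 s * P + (mInt a b fun η => splitKernel C1 C2 s η * Q2 η) + D s * Q2 s := by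
  rw [mInt_eq_add_of_eqOn_Ioo hs.1 hs.2
    ((((hC1.splitKernel hC2).apply_left hs).mul hQ2).intervalIntegrable_apply hab)
    (G := fun η => C1 s η * Q2 η) (H := fun η => C2 s η * Q2 η)
    (fun η hη => by simp only [splitKernel, if_pos hη.2.le])
    (fun η hη => by simp only [splitKernel, if_neg (not_le.2 hη.1)])]
  simp only [Q2comp]
  abel

theorem R1comp_eq (hab : a ≤ b) (Q1 : ℝ → Matrix (Fin m) (Fin n) ℝ)
    (B2 : ℝ → Matrix (Fin n) (Fin m) ℝ) (D S : ℝ → Matrix (Fin n) (Fin n) ℝ)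
    {C1 C2 R1 R2 : ℝ → ℝ → Matrix (Fin n) (Fin n) ℝ} (hC1 : BddMeas2 a b C1)
    (hC2 : BddMeas2 a b C2) (hR1 : BddMeas2 a b R1) (hR2 : BddMeas2 a b R2) {s η : ℝ}
    (hs : s ∈ Icc a b) (hη : η ∈ Icc a s) :
    R1comp a b Q1 B2 D S C1 C2 R1 R2 s η
      = B2 s * Q1 η + splitKernel C1 C2 s η * S η
        + (mInt a b fun θ => splitKernel C1 C2 s θ * splitKernel R1 R2 θ η)
        + D s * splitKernel R1 R2 s η := by
  have hη' : η ∈ Icc a b := ⟨hη.1, hη.2.trans hs.2⟩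
  rw [mInt_eq_add_add_of_eqOn_Ioo hη.1 hη.2 hs.2
    ((((hC1.splitKernel hC2).apply_left hs).mul
      ((hR1.splitKernel hR2).apply_right hη')).intervalIntegrable_apply hab)
    (G := fun θ => C1 s θ * R2 θ η) (H := fun θ => C1 s θ * R1 θ η)
    (J := fun θ => C2 s θ * R1 θ η)
    (fun θ hθ => by simp only [splitKernel, if_pos (hθ.2.le.trans hη.2), if_neg (not_le.2 hθ.2)])
    (fun θ hθ => by simp only [splitKernel, if_pos hθ.2.le, if_pos hθ.1.le])
    (fun θ hθ => by simp only [splitKernel, if_neg (not_le.2 hθ.1), if_pos (hη.2.trans hθ.1.le)])]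
  simp only [R1comp, splitKernel, if_pos hη.2]
  abel

theorem R2comp_eq (hab : a ≤ b) (Q1 : ℝ → Matrix (Fin m) (Fin n) ℝ)
    (B2 : ℝ → Matrix (Fin n) (Fin m) ℝ) (D S : ℝ → Matrix (Fin n) (Fin n) ℝ)
    {C1 C2 R1 R2 : ℝ → ℝ → Matrix (Fin n) (Fin n) ℝ} (hC1 : BddMeas2 a b C1)
    (hC2 : BddMeas2 a b C2) (hR1 : BddMeas2 a b R1) (hR2 : BddMeas2 a b R2) {s η : ℝ}
    (hs : s ∈ Icc a b) (hη : η ∈ Ioc s b) :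
    R2comp a b Q1 B2 D S C1 C2 R1 R2 s η
      = B2 s * Q1 η + splitKernel C1 C2 s η * S η
        + (mInt a b fun θ => splitKernel C1 C2 s θ * splitKernel R1 R2 θ η)
        + D s * splitKernel R1 R2 s η := by
  have hη' : η ∈ Icc a b := ⟨hs.1.trans hη.1.le, hη.2⟩
  rw [mInt_eq_add_add_of_eqOn_Ioo hs.1 hη.1.le hη.2
    ((((hC1.splitKernel hC2).apply_left hs).mul
      ((hR1.splitKernel hR2).apply_right hη')).intervalIntegrable_apply hab)
    (G := fun θ => C1 s θ * R2 θ η) (H := fun θ => C2 s θ * R2 θ η)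
    (J := fun θ => C2 s θ * R1 θ η)
    (fun θ hθ => by
      simp only [splitKernel, if_pos hθ.2.le, if_neg (not_le.2 (hθ.2.trans hη.1))])
    (fun θ hθ => by simp only [splitKernel, if_neg (not_le.2 hθ.1), if_neg (not_le.2 hθ.2)])
    (fun θ hθ => by
      simp only [splitKernel, if_neg (not_le.2 (hη.1.trans hθ.1)), if_pos hθ.1.le])]
  simp only [R2comp, splitKernel, if_neg (not_le.2 hη.1)]
  abel

end CompositionFormulas

theorem MemL2.intervalIntegrable {a b : ℝ} {n : ℕ} {z : ℝ → Fin n → ℝ} (hab : a ≤ b)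
    (hz : MemL2 a b z) : IntervalIntegrable z volume a b :=
  (intervalIntegrable_iff_integrableOn_Icc_of_le hab).2 (hz.integrable one_le_two)

theorem composition_of_Pop_general {m n : ℕ} (a b : ℝ) (hab : a < b)
    (A P : Matrix (Fin m) (Fin m) ℝ)
    (B1 Q1 : ℝ → Matrix (Fin m) (Fin n) ℝ)
    (B2 Q2 : ℝ → Matrix (Fin n) (Fin m) ℝ)
    (D S : ℝ → Matrix (Fin n) (Fin n) ℝ)
    (C1 C2 R1 R2 : ℝ → ℝ → Matrix (Fin n) (Fin n) ℝ)
    (hB1 : BddMeas a b B1) (hQ1 : BddMeas a b Q1)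
    (hQ2 : BddMeas a b Q2)
    (hS : BddMeas a b S)
    (hC1 : BddMeas2 a b C1) (hC2 : BddMeas2 a b C2)
    (hR1 : BddMeas2 a b R1) (hR2 : BddMeas2 a b R2) :
    ∀ (x : Fin m → ℝ) (z : ℝ → Fin n → ℝ), MemL2 a b z →
      (Pop a b A B1 B2 D C1 C2 (Pop a b P Q1 Q2 S R1 R2 (x, z))).1
          = (Pop a b (Pcomp a b A P B1 Q2) (Q1comp a b A B1 Q1 S R1 R2)
              (Q2comp a b P B2 Q2 D C1 C2) (Scomp D S)
              (R1comp a b Q1 B2 D S C1 C2 R1 R2) (R2comp a b Q1 B2 D S C1 C2 R1 R2)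
              (x, z)).1
        ∧ ∀ s ∈ Icc a b,
          (Pop a b A B1 B2 D C1 C2 (Pop a b P Q1 Q2 S R1 R2 (x, z))).2 s
            = (Pop a b (Pcomp a b A P B1 Q2) (Q1comp a b A B1 Q1 S R1 R2)
                (Q2comp a b P B2 Q2 D C1 C2) (Scomp D S)
                (R1comp a b Q1 B2 D S C1 C2 R1 R2) (R2comp a b Q1 B2 D S C1 C2 R1 R2)
                (x, z)).2 s := by
  intro x z hz
  have hz' := hz.intervalIntegrable hab.le
  have hK := hR1.splitKernel hR2
  have hL := hC1.splitKernel hC2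
  have inner := Pop_agreeOn_kernelOp_splitKernel hab.le P Q2 S hQ1 hR1 hR2 (u := (x, z)) hz'
  have outer := Pop_agreeOn_kernelOp_splitKernel hab.le A B2 D hB1 hC1 hC2
    (u := kernelOp a b P Q1 Q2 S (splitKernel R1 R2) (x, z))
    (kernelOp_snd_intervalIntegrable hab.le hQ2 hS hK x hz')
  have comp := kernelOp_comp hab.le (A := A) (P := P) (B2 := B2) (D := D) hB1 hL hQ1 hQ2 hS hK x hz'
  have hats := Pop_agreeOn_kernelOp hab.le (P := Pcomp a b A P B1 Q2) (S := Scomp D S) (u := (x, z))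
    (fun s hs => Q1comp_eq hab.le A Q1 S hB1 hR1 hR2 hs)
    (fun s hs => Q2comp_eq hab.le P B2 D hQ2 hC1 hC2 hs)
    (fun s hs η hη => (R1comp_eq hab.le Q1 B2 D S hC1 hC2 hR1 hR2 hs ⟨hη.1.le, hη.2.le⟩).symm)
    (fun s hs η hη => (R2comp_eq hab.le Q1 B2 D S hC1 hC2 hR1 hR2 hs ⟨hη.1, hη.2.le⟩).symm)
    (.const_mul_add_mul_add_mInt hab.le A hQ1 hB1 hS hK)
    (fun s hs => (BddMeas.const_mul_add_mul_add_mInt hab.le (B2 s) hQ1 (hL.apply_left hs) hS hK).add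
      ((BddMeas.const (D s)).mul (hK.apply_left hs))) hz'
  exact ((inner.map_Pop hab.le A B1 B2 D C1 C2).trans outer).trans (comp.trans hats.symm)

/-- The composition of two operators of the class `𝒫` is again of the
class `𝒫`, with parameters given by the explicit formulas: the two operators agree on
every `(x,z) ∈ ℝ^m × L²([a,b];ℝⁿ)` (the first components agree exactly, and the second
components agree at every point `s ∈ [a,b]`). -/
theorem composition_of_Pop {m n : ℕ} (a b : ℝ) (hab : a < b)
    (A P : Matrix (Fin m) (Fin m) ℝ)
    (B1 Q1 : ℝ → Matrix (Fin m) (Fin n) ℝ)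
    (B2 Q2 : ℝ → Matrix (Fin n) (Fin m) ℝ)
    (D S : ℝ → Matrix (Fin n) (Fin n) ℝ)
    (C1 C2 R1 R2 : ℝ → ℝ → Matrix (Fin n) (Fin n) ℝ)
    (hB1 : BddMeas a b B1) (hQ1 : BddMeas a b Q1)
    (hB2 : BddMeas a b B2) (hQ2 : BddMeas a b Q2)
    (hD : BddMeas a b D) (hS : BddMeas a b S)
    (hC1 : BddMeas2 a b C1) (hC2 : BddMeas2 a b C2)
    (hR1 : BddMeas2 a b R1) (hR2 : BddMeas2 a b R2) :
    ∀ (x : Fin m → ℝ) (z : ℝ → Fin n → ℝ), MemL2 a b z →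
      (Pop a b A B1 B2 D C1 C2 (Pop a b P Q1 Q2 S R1 R2 (x, z))).1
          = (Pop a b (Pcomp a b A P B1 Q2) (Q1comp a b A B1 Q1 S R1 R2)
              (Q2comp a b P B2 Q2 D C1 C2) (Scomp D S)
              (R1comp a b Q1 B2 D S C1 C2 R1 R2) (R2comp a b Q1 B2 D S C1 C2 R1 R2)
              (x, z)).1
        ∧ ∀ s ∈ Icc a b,
          (Pop a b A B1 B2 D C1 C2 (Pop a b P Q1 Q2 S R1 R2 (x, z))).2 s
            = (Pop a b (Pcomp a b A P B1 Q2) (Q1comp a b A B1 Q1 S R1 R2)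
                (Q2comp a b P B2 Q2 D C1 C2) (Scomp D S)
                (R1comp a b Q1 B2 D S C1 C2 R1 R2) (R2comp a b Q1 B2 D S C1 C2 R1 R2)
                (x, z)).2 s :=
  composition_of_Pop_general a b hab A P B1 Q1 B2 Q2 D S C1 C2 R1 R2 hB1 hQ1 hQ2 hS hC1 hC2 hR1 hR2

end
end

section
/- Suppose P ∈ ℝ^{m×m} is symmetric, S : [a,b] → ℝ^{n×n} is bounded measurable with S(s) symmetric for all s, Q : [a,b] → ℝ^{m×n} and R₁, R₂ : [a,b]×[a,b] → ℝ^{n×n} are bounded measurable, and R₂(s,η) = R₁(η,s)ᵀ for all s, η ∈ [a,b]. Then 𝒫_{P,Q,Qᵀ,S,R₁,R₂} is self-adjoint on ℝ^m × L²([a,b];ℝ^n): for all (x₁,x₂), (y₁,y₂) ∈ ℝ^m × L²([a,b];ℝ^n), ⟨(x₁,x₂), 𝒫_{P,Q,Qᵀ,S,R₁,R₂}(y₁,y₂)⟩_X = ⟨𝒫_{P,Q,Qᵀ,S,R₁,R₂}(x₁,x₂), (y₁,y₂)⟩_X. -/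
open MeasureTheory Matrix Set

noncomputable section

/-! Each block of `𝒫` pairs with its mirror image: `P` and `S(s)` are symmetric, the two
`Q`-blocks are transposes of each other, and the two Volterra blocks are exchanged by Fubini's
theorem on the triangle `{η ≤ s}` of `[a,b]²`, because `R₂(s,η) = R₁(η,s)ᵀ` there.  Every
integral converges absolutely since the kernels are bounded and `x₂, y₂ ∈ L²([a,b])`. -/

theorem integrable_dotProduct_mulVec {α ι κ : Type*} [MeasurableSpace α] [Fintype ι] [Fintype κ]
    {μ : Measure α} {M : α → Matrix ι κ ℝ} {u : α → ι → ℝ} {v : α → κ → ℝ} {C : ℝ}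
    (hM : ∀ i j, AEStronglyMeasurable (fun p => M p i j) μ)
    (hC : ∀ᵐ p ∂μ, ∀ i j, |M p i j| ≤ C)
    (huv : ∀ i j, Integrable (fun p => u p i * v p j) μ) :
    Integrable (fun p => u p ⬝ᵥ M p *ᵥ v p) μ := by
  have h_expand : (fun p => u p ⬝ᵥ M p *ᵥ v p)
      = fun p => ∑ i, ∑ j, M p i j * (u p i * v p j) := by
    ext p
    simp only [dotProduct, mulVec, Finset.mul_sum]
    exact Finset.sum_congr rfl fun i _ => Finset.sum_congr rfl fun j _ => by ring
  rw [h_expand]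
  exact integrable_finsetSum _ fun i _ => integrable_finsetSum _ fun j _ =>
    (huv i j).bdd_mul (hM i j) (hC.mono fun p hp => hp i j)

section Interval

variable {a b : ℝ}

theorem MemL2.integrableOn_apply {n : ℕ} {x : ℝ → Fin n → ℝ} (hx : MemL2 a b x) (i : Fin n) :
    IntegrableOn (fun s => x s i) (Icc a b) :=
  (hx.eval i).integrable one_le_two

theorem MemL2.integrableOn_mul {n : ℕ} {x y : ℝ → Fin n → ℝ} (hx : MemL2 a b x)
    (hy : MemL2 a b y) (i j : Fin n) : IntegrableOn (fun s => x s i * y s j) (Icc a b) :=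
  (hx.eval i).integrable_mul (hy.eval j)

theorem BddMeas.integrableOn_dotProduct_mulVec {k l : ℕ} {M : ℝ → Matrix (Fin k) (Fin l) ℝ}
    (hM : BddMeas a b M) {u : ℝ → Fin k → ℝ} {v : ℝ → Fin l → ℝ}
    (huv : ∀ i j, IntegrableOn (fun s => u s i * v s j) (Icc a b)) :
    IntegrableOn (fun s => u s ⬝ᵥ M s *ᵥ v s) (Icc a b) := by
  obtain ⟨C, hC⟩ := hM.2
  exact integrable_dotProduct_mulVec (fun i j => (hM.1 i j).aestronglyMeasurable)
    ((ae_restrict_iff' measurableSet_Icc).2 (ae_of_all _ fun s hs i j => hC s hs i j)) huv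

theorem BddMeas.integrableOn_mulVec_apply {k l : ℕ} {M : ℝ → Matrix (Fin k) (Fin l) ℝ}
    (hM : BddMeas a b M) {z : ℝ → Fin l → ℝ} (hz : MemL2 a b z) (i : Fin k) :
    IntegrableOn (fun s => (M s *ᵥ z s) i) (Icc a b) := by
  classical
  simpa only [single_one_dotProduct] using hM.integrableOn_dotProduct_mulVec
    (u := fun _ => Pi.single i 1) fun _ j => (hz.integrableOn_apply j).const_mul _

theorem BddMeas.dotProduct_intervalIntegral_mulVec {k l : ℕ} {M : ℝ → Matrix (Fin k) (Fin l) ℝ}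
    (hM : BddMeas a b M) {z : ℝ → Fin l → ℝ} (hz : MemL2 a b z) {c d : ℝ} (hc : c ∈ Icc a b)
    (hd : d ∈ Icc a b) (v : Fin k → ℝ) :
    (v ⬝ᵥ fun i => ∫ t in c..d, (M t *ᵥ z t) i) = ∫ t in c..d, v ⬝ᵥ M t *ᵥ z t := by
  simp only [dotProduct, ← intervalIntegral.integral_const_mul]
  refine (intervalIntegral.integral_finsetSum fun i _ => ?_).symm
  exact (((hM.integrableOn_mulVec_apply hz i).mono_set
    (uIcc_subset_Icc hc hd)).intervalIntegrable).const_mul _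

theorem BddMeas.transpose {k l : ℕ} {M : ℝ → Matrix (Fin k) (Fin l) ℝ} (hM : BddMeas a b M) :
    BddMeas a b fun s => (M s)ᵀ :=
  ⟨fun i j => hM.1 j i, hM.2.elim fun C hC => ⟨C, fun s hs i j => hC s hs j i⟩⟩

theorem BddMeas2.bddMeas_apply {k l : ℕ} {K : ℝ → ℝ → Matrix (Fin k) (Fin l) ℝ}
    (hK : BddMeas2 a b K) {s : ℝ} (hs : s ∈ Icc a b) : BddMeas a b (K s) :=
  ⟨fun i j => (hK.1 i j).comp measurable_prodMk_left,
    hK.2.elim fun C hC => ⟨C, fun η hη i j => hC s hs η hη i j⟩⟩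

theorem BddMeas2.transpose_swap {k l : ℕ} {K : ℝ → ℝ → Matrix (Fin k) (Fin l) ℝ}
    (hK : BddMeas2 a b K) : BddMeas2 a b (fun s η => (K η s)ᵀ) :=
  ⟨fun i j => (hK.1 j i).comp measurable_swap,
    hK.2.elim fun C hC => ⟨C, fun s hs η hη i j => hC η hη s hs j i⟩⟩

theorem BddMeas2.integrableOn_dotProduct_mulVec {k l : ℕ}
    {K : ℝ → ℝ → Matrix (Fin k) (Fin l) ℝ} (hK : BddMeas2 a b K) {x : ℝ → Fin k → ℝ}
    {y : ℝ → Fin l → ℝ} (hx : MemL2 a b x) (hy : MemL2 a b y) :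
    IntegrableOn (Function.uncurry fun s η => x s ⬝ᵥ K s η *ᵥ y η) (Icc a b ×ˢ Icc a b) := by
  obtain ⟨C, hC⟩ := hK.2
  rw [IntegrableOn, Measure.volume_eq_prod, ← Measure.prod_restrict]
  refine integrable_dotProduct_mulVec (C := C) (fun i j => (hK.1 i j).aestronglyMeasurable) ?_
    fun i j => (hx.integrableOn_apply i).mul_prod (hy.integrableOn_apply j)
  rw [Measure.prod_restrict]
  exact (ae_restrict_iff' (measurableSet_Icc.prod measurableSet_Icc)).2
    (ae_of_all _ fun p hp i j => hC p.1 hp.1 p.2 hp.2 i j)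

end Interval

theorem IntegrableOn.integrable_prod_restrict {α β E : Type*} [MeasureSpace α] [MeasureSpace β]
    [SFinite (volume : Measure α)] [SFinite (volume : Measure β)] [NormedAddCommGroup E]
    {f : α × β → E} {s : Set α} {t : Set β} (hf : IntegrableOn f (s ×ˢ t)) :
    Integrable f ((volume.restrict s).prod (volume.restrict t)) := by
  rwa [Measure.prod_restrict, ← Measure.volume_eq_prod]

section Triangle

variable {E : Type*} [NormedAddCommGroup E] [NormedSpace ℝ E] {a b : ℝ}

theorem setIntegral_Icc_indicator_Iic {s : ℝ} (hs : s ∈ Icc a b) (f : ℝ → E) :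
    ∫ η in Icc a b, (Iic s).indicator f η = ∫ η in a..s, f η := by
  have h_inter : Iic s ∩ Icc a b = Icc a s :=
    Set.ext fun t => ⟨fun h => ⟨h.2.1, h.1⟩, fun h => ⟨h.2, h.1, h.2.trans hs.2⟩⟩
  rw [integral_indicator measurableSet_Iic, Measure.restrict_restrict measurableSet_Iic, h_inter,
    intervalIntegral.integral_of_le hs.1, integral_Icc_eq_integral_Ioc]

theorem setIntegral_Icc_indicator_Ici {s : ℝ} (hs : s ∈ Icc a b) (f : ℝ → E) :
    ∫ η in Icc a b, (Ici s).indicator f η = ∫ η in s..b, f η := by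
  have h_inter : Ici s ∩ Icc a b = Icc s b :=
    Set.ext fun t => ⟨fun h => ⟨h.1, h.2.2⟩, fun h => ⟨h.1, hs.1.trans h.1, h.2⟩⟩
  rw [integral_indicator measurableSet_Ici, Measure.restrict_restrict measurableSet_Ici, h_inter,
    intervalIntegral.integral_of_le hs.2, integral_Icc_eq_integral_Ioc]

theorem integrableOn_intervalIntegral_left {F : ℝ → ℝ → E}
    (hF : IntegrableOn (Function.uncurry F) (Icc a b ×ˢ Icc a b)) :
    IntegrableOn (fun s => ∫ η in a..s, F s η) (Icc a b) :=
  ((IntegrableOn.integrable_prod_restrict hF).indicator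
    (measurableSet_le measurable_snd measurable_fst)).integral_prod_left.congr
    ((ae_restrict_iff' measurableSet_Icc).2
      (ae_of_all _ fun s hs => setIntegral_Icc_indicator_Iic hs (F s)))

theorem integrableOn_intervalIntegral_right {F : ℝ → ℝ → E}
    (hF : IntegrableOn (Function.uncurry F) (Icc a b ×ˢ Icc a b)) :
    IntegrableOn (fun s => ∫ η in s..b, F s η) (Icc a b) :=
  ((IntegrableOn.integrable_prod_restrict hF).indicator
    (measurableSet_le measurable_fst measurable_snd)).integral_prod_left.congr
    ((ae_restrict_iff' measurableSet_Icc).2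
      (ae_of_all _ fun s hs => setIntegral_Icc_indicator_Ici hs (F s)))

theorem intervalIntegral_intervalIntegral_swap_triangle (hab : a ≤ b) {F : ℝ → ℝ → E}
    (hF : IntegrableOn (Function.uncurry F) (Icc a b ×ˢ Icc a b)) :
    ∫ s in a..b, ∫ η in a..s, F s η = ∫ η in a..b, ∫ s in η..b, F s η := by
  let G := {p : ℝ × ℝ | p.2 ≤ p.1}.indicator (Function.uncurry F)
  have hG : Integrable G _ := (IntegrableOn.integrable_prod_restrict hF).indicator
    (measurableSet_le measurable_snd measurable_fst)
  simp only [intervalIntegral.integral_of_le hab, ← integral_Icc_eq_integral_Ioc]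
  calc ∫ s in Icc a b, ∫ η in a..s, F s η
      = ∫ s in Icc a b, ∫ η in Icc a b, G (s, η) :=
        setIntegral_congr_fun measurableSet_Icc fun s hs =>
          (setIntegral_Icc_indicator_Iic hs (F s)).symm
    _ = ∫ η in Icc a b, ∫ s in Icc a b, G (s, η) := integral_integral_swap hG
    _ = ∫ η in Icc a b, ∫ s in η..b, F s η :=
        setIntegral_congr_fun measurableSet_Icc fun η hη =>
          setIntegral_Icc_indicator_Ici hη (F · η)

end Triangle

section Volterra

variable {a b : ℝ} {n : ℕ} {K : ℝ → ℝ → Matrix (Fin n) (Fin n) ℝ} {x y : ℝ → Fin n → ℝ}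

theorem BddMeas2.integrableOn_dotProduct_volterra_left (hab : a ≤ b) (hK : BddMeas2 a b K)
    (hx : MemL2 a b x) (hy : MemL2 a b y) :
    IntegrableOn (fun s => x s ⬝ᵥ fun i => ∫ η in a..s, (K s η *ᵥ y η) i) (Icc a b) :=
  (integrableOn_intervalIntegral_left (hK.integrableOn_dotProduct_mulVec hx hy)).congr_fun
    (fun _ hs => ((hK.bddMeas_apply hs).dotProduct_intervalIntegral_mulVec hy
      (left_mem_Icc.2 hab) hs _).symm) measurableSet_Icc

theorem BddMeas2.integrableOn_dotProduct_volterra_right (hab : a ≤ b) (hK : BddMeas2 a b K)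
    (hx : MemL2 a b x) (hy : MemL2 a b y) :
    IntegrableOn (fun s => x s ⬝ᵥ fun i => ∫ η in s..b, (K s η *ᵥ y η) i) (Icc a b) :=
  (integrableOn_intervalIntegral_right (hK.integrableOn_dotProduct_mulVec hx hy)).congr_fun
    (fun _ hs => ((hK.bddMeas_apply hs).dotProduct_intervalIntegral_mulVec hy
      hs (right_mem_Icc.2 hab) _).symm) measurableSet_Icc

theorem BddMeas2.integral_dotProduct_volterra (hab : a ≤ b) (hK : BddMeas2 a b K)
    (hx : MemL2 a b x) (hy : MemL2 a b y) :
    (∫ s in a..b, x s ⬝ᵥ fun i => ∫ η in a..s, (K s η *ᵥ y η) i)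
      = ∫ s in a..b, y s ⬝ᵥ fun i => ∫ η in s..b, ((K η s)ᵀ *ᵥ x η) i := by
  calc (∫ s in a..b, x s ⬝ᵥ fun i => ∫ η in a..s, (K s η *ᵥ y η) i)
      = ∫ s in a..b, ∫ η in a..s, x s ⬝ᵥ K s η *ᵥ y η := by
        refine intervalIntegral.integral_congr fun s hs => ?_
        rw [uIcc_of_le hab] at hs
        exact (hK.bddMeas_apply hs).dotProduct_intervalIntegral_mulVec hy (left_mem_Icc.2 hab) hs _
    _ = ∫ η in a..b, ∫ s in η..b, x s ⬝ᵥ K s η *ᵥ y η :=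
        intervalIntegral_intervalIntegral_swap_triangle hab
          (hK.integrableOn_dotProduct_mulVec hx hy)
    _ = ∫ η in a..b, y η ⬝ᵥ fun i => ∫ s in η..b, ((K s η)ᵀ *ᵥ x s) i := by
        refine intervalIntegral.integral_congr fun η hη => ?_
        rw [uIcc_of_le hab] at hη
        rw [(hK.transpose_swap.bddMeas_apply hη).dotProduct_intervalIntegral_mulVec hx hη
          (right_mem_Icc.2 hab)]
        simp only [dotProduct_transpose_mulVec]

end Volterra

theorem Matrix.IsSymm.dotProduct_mulVec_comm {ι : Type*} [Fintype ι] {M : Matrix ι ι ℝ}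
    (hM : M.IsSymm) (u v : ι → ℝ) : u ⬝ᵥ M *ᵥ v = v ⬝ᵥ M *ᵥ u := by
  simpa only [hM.eq] using dotProduct_transpose_mulVec M u v

section Pop

variable {a b : ℝ} {m n : ℕ}

theorem innerX_comm (u v : (Fin m → ℝ) × (ℝ → Fin n → ℝ)) : innerX a b u v = innerX a b v u := by
  simp only [innerX, dotProduct_comm]

theorem innerX_Pop_congr_kernel (hab : a ≤ b) {P : Matrix (Fin m) (Fin m) ℝ}
    {Q1 : ℝ → Matrix (Fin m) (Fin n) ℝ} {Q2 : ℝ → Matrix (Fin n) (Fin m) ℝ}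
    {S : ℝ → Matrix (Fin n) (Fin n) ℝ} {R1 R2 R2' : ℝ → ℝ → Matrix (Fin n) (Fin n) ℝ}
    (hR : ∀ s ∈ Icc a b, ∀ η ∈ Icc a b, R2 s η = R2' s η) (u v : (Fin m → ℝ) × (ℝ → Fin n → ℝ)) :
    innerX a b u (Pop a b P Q1 Q2 S R1 R2 v) = innerX a b u (Pop a b P Q1 Q2 S R1 R2' v) := by
  unfold innerX
  congr 1
  refine intervalIntegral.integral_congr fun s hs => ?_
  rw [uIcc_of_le hab] at hs
  have hRs : ∀ η ∈ uIcc s b, R2 s η = R2' s η :=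
    fun η hη => hR s hs η (uIcc_subset_Icc hs (right_mem_Icc.2 hab) hη)
  simp only [Pop]
  congr 3
  funext i
  exact intervalIntegral.integral_congr fun η hη => by simp only [hRs η hη]

theorem innerX_Pop (hab : a ≤ b) (P : Matrix (Fin m) (Fin m) ℝ)
    (Q1 : ℝ → Matrix (Fin m) (Fin n) ℝ) {Q2 : ℝ → Matrix (Fin n) (Fin m) ℝ}
    {S : ℝ → Matrix (Fin n) (Fin n) ℝ} {R1 R2 : ℝ → ℝ → Matrix (Fin n) (Fin n) ℝ}
    (hQ2 : BddMeas a b Q2) (hS : BddMeas a b S) (hR1 : BddMeas2 a b R1) (hR2 : BddMeas2 a b R2)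
    (x1 y1 : Fin m → ℝ) {x2 y2 : ℝ → Fin n → ℝ} (hx : MemL2 a b x2) (hy : MemL2 a b y2) :
    innerX a b (x1, x2) (Pop a b P Q1 Q2 S R1 R2 (y1, y2))
      = x1 ⬝ᵥ P *ᵥ y1 + (x1 ⬝ᵥ fun i => ∫ s in a..b, (Q1 s *ᵥ y2 s) i)
        + ((∫ s in a..b, x2 s ⬝ᵥ Q2 s *ᵥ y1) + (∫ s in a..b, x2 s ⬝ᵥ S s *ᵥ y2 s)
          + (∫ s in a..b, x2 s ⬝ᵥ fun i => ∫ η in a..s, (R1 s η *ᵥ y2 η) i)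
          + ∫ s in a..b, x2 s ⬝ᵥ fun i => ∫ η in s..b, (R2 s η *ᵥ y2 η) i) := by
  have hQ2_int := (intervalIntegrable_iff_integrableOn_Icc_of_le hab).2
    (hQ2.integrableOn_dotProduct_mulVec fun i j => (hx.integrableOn_apply i).mul_const (y1 j))
  have hS_int := (intervalIntegrable_iff_integrableOn_Icc_of_le hab).2
    (hS.integrableOn_dotProduct_mulVec (hx.integrableOn_mul hy))
  have hR1_int := (intervalIntegrable_iff_integrableOn_Icc_of_le hab).2
    (hR1.integrableOn_dotProduct_volterra_left hab hx hy)
  have hR2_int := (intervalIntegrable_iff_integrableOn_Icc_of_le hab).2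
    (hR2.integrableOn_dotProduct_volterra_right hab hx hy)
  simp only [innerX, Pop, dotProduct_add]
  rw [intervalIntegral.integral_add ((hQ2_int.add hS_int).add hR1_int) hR2_int,
    intervalIntegral.integral_add (hQ2_int.add hS_int) hR1_int,
    intervalIntegral.integral_add hQ2_int hS_int]

end Pop

theorem selfAdjoint_of_Pop_general {m n : ℕ} (a b : ℝ) (hab : a < b)
    (P : Matrix (Fin m) (Fin m) ℝ) (hP : P.IsSymm)
    (Q : ℝ → Matrix (Fin m) (Fin n) ℝ)
    (S : ℝ → Matrix (Fin n) (Fin n) ℝ)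
    (R1 R2 : ℝ → ℝ → Matrix (Fin n) (Fin n) ℝ)
    (hQ : BddMeas a b Q) (hS : BddMeas a b S)
    (hR1 : BddMeas2 a b R1)
    (hSsymm : ∀ s ∈ Icc a b, (S s).IsSymm)
    (hR : ∀ s ∈ Icc a b, ∀ η ∈ Icc a b, R2 s η = (R1 η s)ᵀ) :
    ∀ (x1 : Fin m → ℝ) (x2 : ℝ → Fin n → ℝ) (y1 : Fin m → ℝ) (y2 : ℝ → Fin n → ℝ),
      MemL2 a b x2 → MemL2 a b y2 →
      innerX a b (x1, x2) (Pop a b P Q (fun s => (Q s)ᵀ) S R1 R2 (y1, y2))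
        = innerX a b (Pop a b P Q (fun s => (Q s)ᵀ) S R1 R2 (x1, x2)) (y1, y2) := by
  intro x1 x2 y1 y2 hx hy
  have hQ_adj : ∀ (v : Fin m → ℝ) (z : ℝ → Fin n → ℝ), MemL2 a b z →
      (v ⬝ᵥ fun i => ∫ s in a..b, (Q s *ᵥ z s) i) = ∫ s in a..b, z s ⬝ᵥ (Q s)ᵀ *ᵥ v :=
    fun v z hz => by
      rw [hQ.dotProduct_intervalIntegral_mulVec hz (left_mem_Icc.2 hab.le)
        (right_mem_Icc.2 hab.le)]
      simp only [dotProduct_transpose_mulVec]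
  have hS_adj : (∫ s in a..b, x2 s ⬝ᵥ S s *ᵥ y2 s) = ∫ s in a..b, y2 s ⬝ᵥ S s *ᵥ x2 s :=
    intervalIntegral.integral_congr fun s hs =>
      (hSsymm s (uIcc_of_le hab.le ▸ hs)).dotProduct_mulVec_comm _ _
  rw [innerX_comm (Pop a b P Q _ S R1 R2 (x1, x2)), innerX_Pop_congr_kernel hab.le hR,
    innerX_Pop_congr_kernel hab.le hR,
    innerX_Pop hab.le P Q hQ.transpose hS hR1 hR1.transpose_swap x1 y1 hx hy,
    innerX_Pop hab.le P Q hQ.transpose hS hR1 hR1.transpose_swap y1 x1 hy hx,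
    hP.dotProduct_mulVec_comm, hQ_adj x1 y2 hy, hQ_adj y1 x2 hx, hS_adj,
    hR1.integral_dotProduct_volterra hab.le hx hy, hR1.integral_dotProduct_volterra hab.le hy hx]
  ring

/-- If `P` is symmetric, `S(s)` is symmetric for all `s ∈ [a,b]`, and
`R₂(s,η) = R₁(η,s)ᵀ` on `[a,b] × [a,b]`, then `𝒫_{P,Q,Qᵀ,S,R₁,R₂}` is self-adjoint
on `ℝ^m × L²([a,b];ℝⁿ)` with respect to `⟨·,·⟩_X`. -/
theorem selfAdjoint_of_Pop {m n : ℕ} (a b : ℝ) (hab : a < b)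
    (P : Matrix (Fin m) (Fin m) ℝ) (hP : P.IsSymm)
    (Q : ℝ → Matrix (Fin m) (Fin n) ℝ)
    (S : ℝ → Matrix (Fin n) (Fin n) ℝ)
    (R1 R2 : ℝ → ℝ → Matrix (Fin n) (Fin n) ℝ)
    (hQ : BddMeas a b Q) (hS : BddMeas a b S)
    (hR1 : BddMeas2 a b R1) (hR2 : BddMeas2 a b R2)
    (hSsymm : ∀ s ∈ Icc a b, (S s).IsSymm)
    (hR : ∀ s ∈ Icc a b, ∀ η ∈ Icc a b, R2 s η = (R1 η s)ᵀ) :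
    ∀ (x1 : Fin m → ℝ) (x2 : ℝ → Fin n → ℝ) (y1 : Fin m → ℝ) (y2 : ℝ → Fin n → ℝ),
      MemL2 a b x2 → MemL2 a b y2 →
      innerX a b (x1, x2) (Pop a b P Q (fun s => (Q s)ᵀ) S R1 R2 (y1, y2))
        = innerX a b (Pop a b P Q (fun s => (Q s)ᵀ) S R1 R2 (x1, x2)) (y1, y2) :=
  selfAdjoint_of_Pop_general a b hab P hP Q S R1 R2 hQ hS hR1 hSsymm hR

end
end

section
/- Let z ∈ W^{2,2}([a,b];ℝ^{n_p}) satisfy the boundary condition B_c z_b = 0, where B_c ∈ ℝ^{2n_p×4n_p} and B_c B_d is invertible. Then col(z(a), z_s(a)) = −∫ₐᵇ B_f(η) z_ss(η) dη. -/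
/-!
Taylor's formula with integral remainder gives
`z(b) = z(a) + (b−a) z_s(a) + ∫ₐᵇ (b−η) z_ss(η) dη` and `z_s(b) = z_s(a) + ∫ₐᵇ z_ss`, that is
`z_b = B_d col(z(a), z_s(a)) + ∫ₐᵇ col(0, (b−η)I, 0, I) z_ss(η) dη`.
Applying `B_c` kills the left-hand side, so the invertibility of `B_c B_d` lets us solve for
`col(z(a), z_s(a))`; the constant factor `(B_c B_d)⁻¹ B_c` then moves inside the integral.
-/

open MeasureTheory Matrix Set

noncomputable section

/-- The block matrix `B_d ∈ ℝ^{4n_p × 2n_p}` with block rows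
`[I, 0]`, `[I, (b−a)I]`, `[0, I]`, `[0, I]`. -/
def Bdm (a b : ℝ) (np : ℕ) : Matrix (Fin 4 × Fin np) (Fin 2 × Fin np) ℝ :=
  Matrix.of fun p q =>
    (![![(1 : Matrix (Fin np) (Fin np) ℝ), 0],
       ![1, (b - a) • 1],
       ![0, 1],
       ![0, 1]] p.1 q.1) p.2 q.2

/-- The block column `col(0, (b−η)I, 0, I) ∈ ℝ^{4n_p × n_p}`. -/
def colE (b : ℝ) (np : ℕ) (η : ℝ) : Matrix (Fin 4 × Fin np) (Fin np) ℝ :=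
  Matrix.of fun p j =>
    (![(0 : Matrix (Fin np) (Fin np) ℝ), (b - η) • 1, 0, 1] p.1) p.2 j

/-- `B_f(η) = (B_c B_d)⁻¹ B_c col(0,(b−η)I,0,I)`. -/
def Bfm (a b : ℝ) {np : ℕ}
    (Bc : Matrix (Fin 2 × Fin np) (Fin 4 × Fin np) ℝ) (η : ℝ) :
    Matrix (Fin 2 × Fin np) (Fin np) ℝ :=
  (Bc * Bdm a b np)⁻¹ * Bc * colE b np η

/-- The block row `[I, (s−a)I] ∈ ℝ^{n_p × 2n_p}`. -/
def rowIA (a : ℝ) (np : ℕ) (s : ℝ) : Matrix (Fin np) (Fin 2 × Fin np) ℝ :=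
  Matrix.of fun i q => (![(1 : Matrix (Fin np) (Fin np) ℝ), (s - a) • 1] q.1) i q.2

/-- The block row `[0, I] ∈ ℝ^{n_p × 2n_p}`. -/
def rowZI (np : ℕ) : Matrix (Fin np) (Fin 2 × Fin np) ℝ :=
  Matrix.of fun i q => (![(0 : Matrix (Fin np) (Fin np) ℝ), 1] q.1) i q.2

/-- `B_a(s,η) = −[I,(s−a)I] B_f(η)`. -/
def Bam (a b : ℝ) {np : ℕ}
    (Bc : Matrix (Fin 2 × Fin np) (Fin 4 × Fin np) ℝ) (s η : ℝ) :
    Matrix (Fin np) (Fin np) ℝ :=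
  -(rowIA a np s * Bfm a b Bc η)

/-- `B_b(η) = −[0,I] B_f(η)`. -/
def Bbm (a b : ℝ) {np : ℕ}
    (Bc : Matrix (Fin 2 × Fin np) (Fin 4 × Fin np) ℝ) (η : ℝ) :
    Matrix (Fin np) (Fin np) ℝ :=
  -(rowZI np * Bfm a b Bc η)

/-- `G₁(s,η) = B_a(s,η) + (s−η)I`. -/
def G1m (a b : ℝ) {np : ℕ}
    (Bc : Matrix (Fin 2 × Fin np) (Fin 4 × Fin np) ℝ) (s η : ℝ) :
    Matrix (Fin np) (Fin np) ℝ :=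
  Bam a b Bc s η + (s - η) • 1

/-- `G₂(s,η) = B_a(s,η)`. -/
def G2m (a b : ℝ) {np : ℕ}
    (Bc : Matrix (Fin 2 × Fin np) (Fin 4 × Fin np) ℝ) (s η : ℝ) :
    Matrix (Fin np) (Fin np) ℝ :=
  Bam a b Bc s η

/-- `G₃(s,η) = B_b(η) + I`. -/
def G3m (a b : ℝ) {np : ℕ}
    (Bc : Matrix (Fin 2 × Fin np) (Fin 4 × Fin np) ℝ) (_s η : ℝ) :
    Matrix (Fin np) (Fin np) ℝ :=
  Bbm a b Bc η + 1

/-- `G₄(s,η) = B_b(η)`. -/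
def G4m (a b : ℝ) {np : ℕ}
    (Bc : Matrix (Fin 2 × Fin np) (Fin 4 × Fin np) ℝ) (_s η : ℝ) :
    Matrix (Fin np) (Fin np) ℝ :=
  Bbm a b Bc η

/-- The boundary vector `z_b = col(z(a), z(b), z_s(a), z_s(b)) ∈ ℝ^{4n_p}`. -/
def zbv (a b : ℝ) {np : ℕ} (z zs : ℝ → Fin np → ℝ) : Fin 4 × Fin np → ℝ :=
  fun p => ![z a, z b, zs a, zs b] p.1 p.2

theorem MeasureTheory.MemLp.intervalIntegrable_of_le {E : Type*} [NormedAddCommGroup E]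
    {f : ℝ → E} {p : ENNReal} {a b : ℝ} (hp : 1 ≤ p)
    (hf : MemLp f p (volume.restrict (Icc a b))) (hab : a ≤ b) :
    IntervalIntegrable f volume a b := by
  have : IsFiniteMeasure (volume.restrict (Icc a b)) :=
    isFiniteMeasure_restrict.2 measure_Icc_lt_top.ne
  exact (intervalIntegrable_iff_integrableOn_Icc_of_le hab).2 (hf.integrable hp)

namespace intervalIntegral

variable {E : Type*} [NormedAddCommGroup E] [NormedSpace ℝ E] [CompleteSpace E] {a b : ℝ}

theorem integral_eq_sub_of_hasDerivWithinAt_Icc {f f' : ℝ → E} (hab : a ≤ b)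
    (hf : ∀ s ∈ Icc a b, HasDerivWithinAt f (f' s) (Icc a b) s)
    (hf' : IntervalIntegrable f' volume a b) :
    ∫ s in a..b, f' s = f b - f a :=
  integral_eq_sub_of_hasDerivAt_of_le hab
    (fun s hs => (hf s hs).continuousWithinAt)
    (fun s hs => (hf s (Ioo_subset_Icc_self hs)).hasDerivAt (Icc_mem_nhds hs.1 hs.2)) hf'

theorem integral_sub_smul_eq_taylor_remainder {f f' f'' : ℝ → E} (hab : a ≤ b)
    (hf : ∀ s ∈ Icc a b, HasDerivWithinAt f (f' s) (Icc a b) s)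
    (hf' : ∀ s ∈ Icc a b, HasDerivWithinAt f' (f'' s) (Icc a b) s)
    (hf'' : IntervalIntegrable f'' volume a b) :
    ∫ s in a..b, (b - s) • f'' s = f b - f a - (b - a) • f' a := by
  have hderiv : ∀ s ∈ Icc a b, HasDerivWithinAt (fun t => (b - t) • f' t + f t)
      ((b - s) • f'' s) (Icc a b) s := by
    intro s hs
    have hlin : HasDerivWithinAt (fun t => b - t) (-1) (Icc a b) s :=
      (hasDerivWithinAt_id s _).const_sub b
    convert (hlin.fun_smul (hf' s hs)).fun_add (hf s hs) using 1
    rw [neg_one_smul, neg_add_cancel_right]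
  rw [integral_eq_sub_of_hasDerivWithinAt_Icc hab hderiv
    (hf''.continuousOn_smul (by fun_prop))]
  simp only [sub_self, zero_smul, zero_add]
  abel

end intervalIntegral

section Pi

variable {E ι : Type*} [NormedAddCommGroup E] [Fintype ι] {μ : Measure ℝ} {a b : ℝ}

theorem intervalIntegrable_pi_iff {f : ℝ → ι → E} :
    IntervalIntegrable f μ a b ↔ ∀ i, IntervalIntegrable (f · i) μ a b := by
  simp only [intervalIntegrable_iff, IntegrableOn, integrable_pi_iff]

theorem intervalIntegral_eval [NormedSpace ℝ E] [CompleteSpace E] {f : ℝ → ι → E}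
    (hf : IntervalIntegrable f μ a b) (i : ι) :
    (∫ x in a..b, f x ∂μ) i = ∫ x in a..b, f x i ∂μ :=
  ((ContinuousLinearMap.proj (R := ℝ) i).intervalIntegral_comp_comm hf).symm

theorem Matrix.mulVec_intervalIntegral_apply {m n : Type*} [Fintype n] (A : Matrix m n ℝ)
    {f : ℝ → n → ℝ} (hf : IntervalIntegrable f μ a b) (i : m) :
    (A *ᵥ ∫ x in a..b, f x ∂μ) i = ∫ x in a..b, (A *ᵥ f x) i ∂μ :=
  (((ContinuousLinearMap.proj (R := ℝ) i).comp
    (LinearMap.toContinuousLinearMap A.mulVecLin)).intervalIntegral_comp_comm hf).symm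

end Pi

theorem Matrix.eq_neg_mulVec_of_mulVec_add_eq_zero {R k m : Type*} [CommRing R] [Fintype k]
    [DecidableEq k] [Fintype m] {C : Matrix k m R} {D : Matrix m k R} (hCD : IsUnit (C * D).det)
    {w : k → R} {v : m → R} (h : C *ᵥ (D *ᵥ w + v) = 0) :
    w = -(((C * D)⁻¹ * C) *ᵥ v) := by
  rw [mulVec_add, mulVec_mulVec, add_eq_zero_iff_eq_neg] at h
  rw [← mulVec_mulVec, ← mulVec_neg, ← h, mulVec_mulVec, nonsing_inv_mul _ hCD, one_mulVec]

section Blocks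

variable {np : ℕ} {a b : ℝ}

theorem colE_mulVec (η : ℝ) (v : Fin np → ℝ) :
    colE b np η *ᵥ v = Function.uncurry ![(0 : Fin np → ℝ), (b - η) • v, 0, v] := by
  ext ⟨k, i⟩
  revert k
  simp [Fin.forall_fin_succ, colE, mulVec, dotProduct, Matrix.one_apply]

theorem Bdm_mulVec (x y : Fin np → ℝ) :
    Bdm a b np *ᵥ Function.uncurry ![x, y] = Function.uncurry ![x, x + (b - a) • y, y, y] := by
  ext ⟨k, i⟩
  revert k
  simp [Fin.forall_fin_succ, Bdm, mulVec, dotProduct, Fintype.sum_prod_type, Matrix.one_apply]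

variable {z zs zss : ℝ → Fin np → ℝ}

theorem intervalIntegrable_colE_mulVec (hzss : IntervalIntegrable zss volume a b) :
    IntervalIntegrable (fun η => colE b np η *ᵥ zss η) volume a b := by
  simp only [colE_mulVec]
  refine intervalIntegrable_pi_iff.2 fun ⟨k, i⟩ => ?_
  have hzssi := intervalIntegrable_pi_iff.1 hzss i
  have hmul : IntervalIntegrable (fun η => (b - η) * zss η i) volume a b :=
    hzssi.continuousOn_mul (by fun_prop)
  revert k
  simp [Fin.forall_fin_succ, hzssi, hmul]

theorem zbv_eq_Bdm_mulVec_add_integral (hab : a ≤ b)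
    (hz : ∀ s ∈ Icc a b, HasDerivWithinAt z (zs s) (Icc a b) s)
    (hzs : ∀ s ∈ Icc a b, HasDerivWithinAt zs (zss s) (Icc a b) s)
    (hzss : IntervalIntegrable zss volume a b) :
    zbv a b z zs =
      Bdm a b np *ᵥ Function.uncurry ![z a, zs a] + ∫ η in a..b, colE b np η *ᵥ zss η := by
  ext ⟨k, i⟩
  have hzi s hs := hasDerivWithinAt_pi.1 (hz s hs) i
  have hzsi s hs := hasDerivWithinAt_pi.1 (hzs s hs) i
  have hzssi := intervalIntegrable_pi_iff.1 hzss i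
  have htaylor := intervalIntegral.integral_sub_smul_eq_taylor_remainder hab hzi hzsi hzssi
  have hftc := intervalIntegral.integral_eq_sub_of_hasDerivWithinAt_Icc hab hzsi hzssi
  simp only [smul_eq_mul] at htaylor
  rw [Pi.add_apply, intervalIntegral_eval (intervalIntegrable_colE_mulVec hzss)]
  simp only [colE_mulVec, Bdm_mulVec]
  revert k
  simp [Fin.forall_fin_succ, zbv, htaylor, hftc]

end Blocks

/-- If `z ∈ W^{2,2}([a,b];ℝ^{n_p})` satisfies `B_c z_b = 0` with
`B_c B_d` invertible, then `col(z(a), z_s(a)) = −∫ₐᵇ B_f(η) z_ss(η) dη`. -/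
theorem boundary_from_zss {np : ℕ} (a b : ℝ) (hab : a < b)
    (z zs zss : ℝ → Fin np → ℝ)
    (hz : ∀ s ∈ Icc a b, HasDerivWithinAt z (zs s) (Icc a b) s)
    (hzs : ∀ s ∈ Icc a b, HasDerivWithinAt zs (zss s) (Icc a b) s)
    (hzss : MemLp zss 2 (volume.restrict (Icc a b)))
    (Bc : Matrix (Fin 2 × Fin np) (Fin 4 × Fin np) ℝ)
    (hdet : IsUnit (Bc * Bdm a b np).det)
    (hbc : Bc.mulVec (zbv a b z zs) = 0) :
    (fun q : Fin 2 × Fin np => ![z a, zs a] q.1 q.2)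
      = -(fun q : Fin 2 × Fin np => ∫ η in a..b, (Bfm a b Bc η).mulVec (zss η) q) := by
  have hint := hzss.intervalIntegrable_of_le one_le_two hab.le
  rw [zbv_eq_Bdm_mulVec_add_integral hab.le hz hzs hint] at hbc
  change Function.uncurry ![z a, zs a] = _
  rw [Matrix.eq_neg_mulVec_of_mulVec_add_eq_zero hdet hbc]
  ext q
  rw [Pi.neg_apply, mulVec_intervalIntegral_apply _ (intervalIntegrable_colE_mulVec hint)]
  simp only [Pi.neg_apply, Bfm, mulVec_mulVec]

end
end
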